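/- arXiv:cs/0501025 — 7 statements merged into one kernel-verified Lean document; each statement's English description precedes it below -/
import Mathlib

section
/- Let L be a complete lattice and f : L → L an antitone map. Then f (lfp (f ∘ f)) = gfp (f ∘ f) and f (gfp (f ∘ f)) = lfp (f ∘ f); in particular, the pair (lfp (f ∘ f), gfp (f ∘ f)) is an oscillating pair of f. -/
theorem stmt_2 {L : Type*} [CompleteLattice L] (f : L → L) (hf : Antitone f) :
    f (OrderHom.lfp ⟨f ∘ f, hf.comp hf⟩) = OrderHom.gfp ⟨f ∘ f, hf.comp hf⟩ ∧
    f (OrderHom.gfp ⟨f ∘ f, hf.comp hf⟩) = OrderHom.lfp ⟨f ∘ f, hf.comp hf⟩ := by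
  set g : L →o L := ⟨f ∘ f, hf.comp hf⟩ with hg
  have ha : f (f g.lfp) = g.lfp := OrderHom.map_lfp g
  have hb : f (f g.gfp) = g.gfp := OrderHom.map_gfp g
  have h1 : f g.lfp ≤ g.gfp := by
    apply OrderHom.le_gfp
    show f g.lfp ≤ f (f (f g.lfp))
    rw [ha]
  have h2 : g.lfp ≤ f g.gfp := by
    apply OrderHom.lfp_le
    show f (f (f g.gfp)) ≤ f g.gfp
    rw [hb]
  have h3 : g.gfp ≤ f g.lfp := by
    calc g.gfp = f (f g.gfp) := hb.symm
    _ ≤ f g.lfp := hf h2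
  have e1 : f g.lfp = g.gfp := le_antisymm h1 h3
  refine ⟨e1, ?_⟩
  rw [← e1, ha]
end

section
/- Let L be a complete lattice and f : L → L antitone, with the alternating transfinite sequences (x^ξ), (x^{<ξ}), (y^ξ), (y^{<ξ}). Then for every ordinal ξ one has x^{<ξ} ≤ x^ξ ≤ y^ξ ≤ y^{<ξ}; moreover the sequence (x^ξ) is increasing and the sequence (y^ξ) is decreasing, i.e. for all ordinals η ≤ ξ, x^η ≤ x^ξ and y^ξ ≤ y^η. -/
/-- The alternating transfinite sequence of an operator `f` on a complete lattice:
`(altSeq f ξ).1 = x^ξ = f (y^{<ξ})` and `(altSeq f ξ).2 = y^ξ = f (x^{<ξ})`,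
where `x^{<ξ} = ⨆_{η < ξ} x^η` and `y^{<ξ} = ⨅_{η < ξ} y^η`. -/
noncomputable def altSeq {L : Type*} [CompleteLattice L] (f : L → L) (ξ : Ordinal) : L × L :=
  (f (⨅ η : {η : Ordinal // η < ξ}, (altSeq f η.1).2),
   f (⨆ η : {η : Ordinal // η < ξ}, (altSeq f η.1).1))
termination_by ξ
decreasing_by all_goals exact η.2

/-- `x^ξ`. -/
noncomputable def xSeq {L : Type*} [CompleteLattice L] (f : L → L) (ξ : Ordinal) : L :=
  (altSeq f ξ).1

/-- `y^ξ`. -/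
noncomputable def ySeq {L : Type*} [CompleteLattice L] (f : L → L) (ξ : Ordinal) : L :=
  (altSeq f ξ).2

/-- `x^{<ξ} = ⨆_{η < ξ} x^η`. -/
noncomputable def xLtSeq {L : Type*} [CompleteLattice L] (f : L → L) (ξ : Ordinal) : L :=
  ⨆ η : {η : Ordinal // η < ξ}, xSeq f η.1

/-- `y^{<ξ} = ⨅_{η < ξ} y^η`. -/
noncomputable def yLtSeq {L : Type*} [CompleteLattice L] (f : L → L) (ξ : Ordinal) : L :=
  ⨅ η : {η : Ordinal // η < ξ}, ySeq f η.1

lemma xSeq_def' {L : Type*} [CompleteLattice L] (f : L → L) (ξ : Ordinal) :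
    xSeq f ξ = f (yLtSeq f ξ) := by
  rw [xSeq, altSeq]; rfl

lemma ySeq_def' {L : Type*} [CompleteLattice L] (f : L → L) (ξ : Ordinal) :
    ySeq f ξ = f (xLtSeq f ξ) := by
  rw [ySeq, altSeq]; rfl

lemma xLtSeq_mono {L : Type*} [CompleteLattice L] (f : L → L) {η ξ : Ordinal} (h : η ≤ ξ) :
    xLtSeq f η ≤ xLtSeq f ξ :=
  iSup_le fun i => le_iSup_of_le ⟨i.1, lt_of_lt_of_le i.2 h⟩ le_rfl

lemma yLtSeq_anti {L : Type*} [CompleteLattice L] (f : L → L) {η ξ : Ordinal} (h : η ≤ ξ) :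
    yLtSeq f ξ ≤ yLtSeq f η :=
  le_iInf fun i => iInf_le_of_le ⟨i.1, lt_of_lt_of_le i.2 h⟩ le_rfl

lemma xSeq_mono {L : Type*} [CompleteLattice L] {f : L → L} (hf : Antitone f)
    {η ξ : Ordinal} (h : η ≤ ξ) : xSeq f η ≤ xSeq f ξ := by
  rw [xSeq_def', xSeq_def']; exact hf (yLtSeq_anti f h)

lemma ySeq_anti {L : Type*} [CompleteLattice L] {f : L → L} (hf : Antitone f)
    {η ξ : Ordinal} (h : η ≤ ξ) : ySeq f ξ ≤ ySeq f η := by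
  rw [ySeq_def', ySeq_def']; exact hf (xLtSeq_mono f h)

lemma xSeq_le_ySeq {L : Type*} [CompleteLattice L] {f : L → L} (hf : Antitone f)
    (ξ : Ordinal) : xSeq f ξ ≤ ySeq f ξ := by
  induction ξ using Ordinal.induction with
  | h ξ IH =>
    rw [xSeq_def', ySeq_def']
    refine hf (iSup_le fun i => le_iInf fun j => ?_)
    rcases le_total i.1 j.1 with h | h
    · exact le_trans (xSeq_mono hf h) (IH j.1 j.2)
    · exact le_trans (IH i.1 i.2) (ySeq_anti hf h)

theorem stmt_4 {L : Type*} [CompleteLattice L] (f : L → L) (hf : Antitone f) :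
    (∀ ξ : Ordinal, xLtSeq f ξ ≤ xSeq f ξ ∧ xSeq f ξ ≤ ySeq f ξ ∧ ySeq f ξ ≤ yLtSeq f ξ) ∧
    (∀ η ξ : Ordinal, η ≤ ξ → xSeq f η ≤ xSeq f ξ ∧ ySeq f ξ ≤ ySeq f η) := by
  refine ⟨fun ξ => ⟨iSup_le fun i => xSeq_mono hf i.2.le, xSeq_le_ySeq hf ξ,
      le_iInf fun i => ySeq_anti hf i.2.le⟩,
    fun η ξ h => ⟨xSeq_mono hf h, ySeq_anti hf h⟩⟩
end

section
/- Let h : L → L' be a complete lattice homomorphism, let O : L → L be monotone and satisfy h x = h y → h (O x) = h (O y) for all x, y ∈ L, and let O' : L' → L' be monotone with O' (h x) = h (O x) for all x ∈ L. Then h (lfp O) = lfp O' and h (gfp O) = gfp O'. -/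
theorem stmt_9 {L L' : Type*} [CompleteLattice L] [CompleteLattice L'] (h : L → L')
    (hsurj : Function.Surjective h)
    (hSup : ∀ S : Set L, h (sSup S) = sSup (h '' S))
    (hInf : ∀ S : Set L, h (sInf S) = sInf (h '' S))
    (O : L → L) (hOmono : Monotone O)
    (hO : ∀ x y : L, h x = h y → h (O x) = h (O y))
    (O' : L' → L') (hO'mono : Monotone O')
    (hO' : ∀ x : L, O' (h x) = h (O x)) :
    h (OrderHom.lfp ⟨O, hOmono⟩) = OrderHom.lfp ⟨O', hO'mono⟩ ∧
    h (OrderHom.gfp ⟨O, hOmono⟩) = OrderHom.gfp ⟨O', hO'mono⟩ := by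
  have hmono : Monotone h := by
    intro a b hab
    have key := hSup {a, b}
    rw [sSup_pair, sup_eq_right.2 hab, Set.image_pair, sSup_pair] at key
    rw [key]; exact le_sup_left
  constructor
  · -- lfp
    have hfix : O (OrderHom.lfp ⟨O, hOmono⟩) = OrderHom.lfp ⟨O, hOmono⟩ :=
      OrderHom.map_lfp ⟨O, hOmono⟩
    have hfix' : O' (h (OrderHom.lfp ⟨O, hOmono⟩)) = h (OrderHom.lfp ⟨O, hOmono⟩) := by
      rw [hO', hfix]
    refine le_antisymm ?_ (OrderHom.lfp_le_fixed ⟨O', hO'mono⟩ hfix')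
    set y := OrderHom.lfp ⟨O', hO'mono⟩ with hy
    set S : Set L := {x | h x ≤ y} with hS
    have hSy : h (sSup S) ≤ y := by
      rw [hSup]
      exact sSup_le (by rintro _ ⟨x, hx, rfl⟩; exact hx)
    have hyfix : O' y = y := OrderHom.map_lfp ⟨O', hO'mono⟩
    have hmem : O (sSup S) ∈ S := by
      show h (O (sSup S)) ≤ y
      rw [← hO']
      calc O' (h (sSup S)) ≤ O' y := hO'mono hSy
        _ = y := hyfix
    have hpre : O (sSup S) ≤ sSup S := le_sSup hmem
    have hle : OrderHom.lfp ⟨O, hOmono⟩ ≤ sSup S := OrderHom.lfp_le ⟨O, hOmono⟩ hpre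
    exact (hmono hle).trans hSy
  · -- gfp
    have hfix : O (OrderHom.gfp ⟨O, hOmono⟩) = OrderHom.gfp ⟨O, hOmono⟩ :=
      OrderHom.map_gfp ⟨O, hOmono⟩
    have hfix' : O' (h (OrderHom.gfp ⟨O, hOmono⟩)) = h (OrderHom.gfp ⟨O, hOmono⟩) := by
      rw [hO', hfix]
    refine le_antisymm (OrderHom.le_gfp ⟨O', hO'mono⟩ hfix'.ge) ?_
    set y := OrderHom.gfp ⟨O', hO'mono⟩ with hy
    set S : Set L := {x | y ≤ h x} with hS
    have hSy : y ≤ h (sInf S) := by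
      rw [hInf]
      exact le_sInf (by rintro _ ⟨x, hx, rfl⟩; exact hx)
    have hyfix : O' y = y := OrderHom.map_gfp ⟨O', hO'mono⟩
    have hmem : O (sInf S) ∈ S := by
      show y ≤ h (O (sInf S))
      rw [← hO']
      calc y = O' y := hyfix.symm
        _ ≤ O' (h (sInf S)) := hO'mono hSy
    have hpre : sInf S ≤ O (sInf S) := sInf_le hmem
    have hle : sInf S ≤ OrderHom.gfp ⟨O, hOmono⟩ := OrderHom.le_gfp ⟨O, hOmono⟩ hpre
    exact hSy.trans (hmono hle)
end

section
/- Let h : L → L' be a complete lattice homomorphism, let O : L → L be antitone and satisfy h x = h y → h (O x) = h (O y) for all x, y ∈ L, and let O' : L' → L' be antitone with O' (h x) = h (O x) for all x ∈ L. Then h (lfp (O ∘ O)) = lfp (O' ∘ O') and h (gfp (O ∘ O)) = gfp (O' ∘ O'); that is, h maps the maximal oscillating pair of O to the maximal oscillating pair of O'. -/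
theorem stmt_10 {L L' : Type*} [CompleteLattice L] [CompleteLattice L'] (h : L → L')
    (hsurj : Function.Surjective h)
    (hSup : ∀ S : Set L, h (sSup S) = sSup (h '' S))
    (hInf : ∀ S : Set L, h (sInf S) = sInf (h '' S))
    (O : L → L) (hOanti : Antitone O)
    (hO : ∀ x y : L, h x = h y → h (O x) = h (O y))
    (O' : L' → L') (hO'anti : Antitone O')
    (hO' : ∀ x : L, O' (h x) = h (O x)) :
    h (OrderHom.lfp ⟨O ∘ O, hOanti.comp hOanti⟩) =
      OrderHom.lfp ⟨O' ∘ O', hO'anti.comp hO'anti⟩ ∧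
    h (OrderHom.gfp ⟨O ∘ O, hOanti.comp hOanti⟩) =
      OrderHom.gfp ⟨O' ∘ O', hO'anti.comp hO'anti⟩ := by
  set f : L →o L := ⟨O ∘ O, hOanti.comp hOanti⟩ with hf
  set f' : L' →o L' := ⟨O' ∘ O', hO'anti.comp hO'anti⟩ with hf'
  have hmono : Monotone h := by
    intro x y hxy
    have h1 : h (x ⊔ y) = h x ⊔ h y := by
      have := hSup {x, y}
      simpa [Set.image_pair] using this
    have h2 : x ⊔ y = y := sup_eq_right.mpr hxy
    calc h x ≤ h x ⊔ h y := le_sup_left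
      _ = h (x ⊔ y) := h1.symm
      _ = h y := by rw [h2]
  have comm : ∀ x, h (f x) = f' (h x) := by
    intro x
    show h (O (O x)) = O' (O' (h x))
    rw [hO' x, hO' (O x)]
  constructor
  · -- lfp
    apply le_antisymm
    · -- h (lfp f) ≤ lfp f' : pull back the prefixed point lfp f'
      set b := OrderHom.lfp f' with hb
      set a := sSup {x : L | h x ≤ b} with ha
      have hha : h a = b := by
        apply le_antisymm
        · rw [ha, hSup]
          apply sSup_le
          rintro _ ⟨x, hx, rfl⟩
          exact hx
        · obtain ⟨c, hc⟩ := hsurj b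
          have : c ∈ {x : L | h x ≤ b} := le_of_eq hc
          calc b = h c := hc.symm
            _ ≤ h a := hmono (le_sSup this)
      have hpre : f a ≤ a := by
        apply le_sSup
        show h (f a) ≤ b
        rw [comm, hha]
        exact le_of_eq (OrderHom.map_lfp f')
      calc h (OrderHom.lfp f) ≤ h a := hmono (OrderHom.lfp_le f hpre)
        _ = b := hha
    · -- lfp f' ≤ h (lfp f)
      apply OrderHom.lfp_le
      rw [← comm, OrderHom.map_lfp]
  · -- gfp
    apply le_antisymm
    · -- h (gfp f) ≤ gfp f'
      apply OrderHom.le_gfp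
      rw [← comm, OrderHom.map_gfp]
    · -- gfp f' ≤ h (gfp f) : pull back the postfixed point gfp f'
      set b := OrderHom.gfp f' with hb
      set a := sInf {x : L | b ≤ h x} with ha
      have hha : h a = b := by
        apply le_antisymm
        · obtain ⟨c, hc⟩ := hsurj b
          have : c ∈ {x : L | b ≤ h x} := le_of_eq hc.symm
          calc h a ≤ h c := hmono (sInf_le this)
            _ = b := hc
        · rw [ha, hInf]
          apply le_sInf
          rintro _ ⟨x, hx, rfl⟩
          exact hx
      have hpost : a ≤ f a := by
        apply sInf_le
        show b ≤ h (f a)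
        rw [comm, hha]
        exact le_of_eq (OrderHom.map_gfp f').symm
      calc b = h a := hha.symm
        _ ≤ h (OrderHom.gfp f) := hmono (OrderHom.le_gfp f hpost)
end

section
/- Let A be a type, let r be a well-founded binary relation on A, and let T : (A → Prop) → (A → Prop) → (A → Prop) be an operator that respects r. If predicates I, J satisfy T I J = I and T J I = J, then I = J; moreover, if predicates I', J' also satisfy T I' J' = I' and T J' I' = J', then I = I' and J = J'. In other words, T has at most one oscillating pair of predicates, and its components coincide. -/
/-- `T` respects the relation `r`: the value of `T I J` at `a` only depends on
the values of `I` and `J` at points `b` with `r b a`. -/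
def RespectsRel {A : Type*} (r : A → A → Prop)
    (T : (A → Prop) → (A → Prop) → (A → Prop)) : Prop :=
  ∀ (a : A) (I I' J J' : A → Prop),
    (∀ b, r b a → (I b ↔ I' b)) → (∀ b, r b a → (J b ↔ J' b)) →
    (T I J a ↔ T I' J' a)

theorem key_12 {A : Type*} (r : A → A → Prop) (hwf : WellFounded r)
    (T : (A → Prop) → (A → Prop) → (A → Prop)) (hT : RespectsRel r T)
    (I J : A → Prop) (h1 : T I J = I) (h2 : T J I = J)
    (I' J' : A → Prop) (h1' : T I' J' = I') (h2' : T J' I' = J') :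
    ∀ a, (I a ↔ I' a) ∧ (J a ↔ J' a) := by
  intro a
  induction a using hwf.induction with
  | _ a ih =>
    constructor
    · rw [← h1, ← h1']
      exact hT a I I' J J' (fun b hb => (ih b hb).1) (fun b hb => (ih b hb).2)
    · rw [← h2, ← h2']
      exact hT a J J' I I' (fun b hb => (ih b hb).2) (fun b hb => (ih b hb).1)

theorem stmt_12 {A : Type*} (r : A → A → Prop) (hwf : WellFounded r)
    (T : (A → Prop) → (A → Prop) → (A → Prop)) (hT : RespectsRel r T)
    (I J : A → Prop) (h1 : T I J = I) (h2 : T J I = J)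
    (I' J' : A → Prop) (h1' : T I' J' = I') (h2' : T J' I' = J') :
    I = J ∧ I = I' ∧ J = J' := by
  refine ⟨funext fun a => propext ?_, funext fun a => propext ?_, funext fun a => propext ?_⟩
  · exact (key_12 r hwf T hT I J h1 h2 J I h2 h1 a).1
  · exact (key_12 r hwf T hT I J h1 h2 I' J' h1' h2' a).1
  · exact (key_12 r hwf T hT I J h1 h2 I' J' h1' h2' a).2
end

section
/- Let A be a type, let r be a well-founded binary relation on A, and let T : (A → Prop) → (A → Prop) → (A → Prop) be an operator that respects r, is monotone in its first argument and antitone in its second argument (with respect to the pointwise order on predicates). Then there exists exactly one predicate I : A → Prop with T I I = I. -/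
theorem stmt_13 {A : Type*} (r : A → A → Prop) (hwf : WellFounded r)
    (T : (A → Prop) → (A → Prop) → (A → Prop)) (hT : RespectsRel r T)
    (hmono : ∀ J : A → Prop, Monotone fun I => T I J)
    (hanti : ∀ I : A → Prop, Antitone fun J => T I J) :
    ∃! I : A → Prop, T I I = I := by
  set F : (a : A) → ((b : A) → r b a → Prop) → Prop :=
    fun a rec => T (fun b => ∃ h : r b a, rec b h) (fun b => ∃ h : r b a, rec b h) a with hF
  set I : A → Prop := hwf.fix F with hI
  have hfix : ∀ a, I a ↔ T I I a := by
    intro a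
    rw [hI, hwf.fix_eq F a, hF]
    exact hT a _ I _ I
      (fun b hb => ⟨fun ⟨_, h⟩ => h, fun h => ⟨hb, h⟩⟩)
      (fun b hb => ⟨fun ⟨_, h⟩ => h, fun h => ⟨hb, h⟩⟩)
  refine ⟨I, funext fun a => propext (hfix a).symm, ?_⟩
  intro J hJ
  funext a
  apply propext
  induction a using hwf.induction with
  | _ a ih =>
    have : T J J a ↔ T I I a := hT a J I J I ih ih
    exact ((congrFun hJ a).to_iff.symm.trans this).trans (hfix a).symm
end

section
/- Let D and O be complete lattices and C = D × O with the product order. Let T, S : C → C → C be operators, each monotone in its first argument and antitone in its second argument, such that for all I, J ∈ C: (T I J).1 = (S I J).1 and (S I J).2 = J.2. Define the stable operators ST_T K = lfp (I ↦ T I K) and ST_S K = lfp (I ↦ S I K). Suppose M ∈ C satisfies ST_T M = M, and L ∈ C satisfies L.2 = M.2. Then: (a) for every K ∈ C with K ≤ L and K ≤ M, one has ST_S L ≤ ST_T K; and (b) for every K ∈ C with L ≤ K and M ≤ K, one has ST_T K ≤ ST_S L. -/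
theorem stmt_14 {D O : Type*} [CompleteLattice D] [CompleteLattice O]
    (T S : D × O → D × O → D × O)
    (hTmono : ∀ J, Monotone fun I => T I J) (hTanti : ∀ I, Antitone fun J => T I J)
    (hSmono : ∀ J, Monotone fun I => S I J) (hSanti : ∀ I, Antitone fun J => S I J)
    (hfst : ∀ I J, (T I J).1 = (S I J).1) (hsnd : ∀ I J, (S I J).2 = J.2)
    (M : D × O) (hM : OrderHom.lfp ⟨fun I => T I M, hTmono M⟩ = M)
    (L : D × O) (hL : L.2 = M.2) :
    (∀ K : D × O, K ≤ L → K ≤ M →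
      OrderHom.lfp ⟨fun I => S I L, hSmono L⟩ ≤ OrderHom.lfp ⟨fun I => T I K, hTmono K⟩) ∧
    (∀ K : D × O, L ≤ K → M ≤ K →
      OrderHom.lfp ⟨fun I => T I K, hTmono K⟩ ≤ OrderHom.lfp ⟨fun I => S I L, hSmono L⟩) := by
  have hMfix : T M M = M := by
    have h := OrderHom.map_lfp ⟨fun I => T I M, hTmono M⟩
    rw [hM] at h
    exact h
  constructor
  · intro K hKL hKM
    set x := OrderHom.lfp ⟨fun I => T I K, hTmono K⟩ with hx
    -- M ≤ x since lfp is monotone in the operator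
    have hMx : M ≤ x := by
      rw [← hM]
      exact OrderHom.lfp.monotone (fun I => hTanti I hKM)
    have hxfix : T x K = x := OrderHom.map_lfp ⟨fun I => T I K, hTmono K⟩
    apply OrderHom.lfp_le
    show S x L ≤ x
    have h : S x L ≤ T x K := by
      constructor
      · rw [← hfst]
        exact (hTanti x hKL).1
      · have h1 : (S x L).2 = (T M M).2 := by rw [hsnd, hL, hMfix]
        rw [h1]
        exact ((hTmono M hMx).trans (hTanti x hKM)).2
    exact h.trans hxfix.le
  · intro K hLK hMK
    set y := OrderHom.lfp ⟨fun I => S I L, hSmono L⟩ with hy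
    have hyfix : S y L = y := OrderHom.map_lfp ⟨fun I => S I L, hSmono L⟩
    -- T M K ≤ M
    have hTMK : T M K ≤ M := by
      conv_rhs => rw [← hMfix]
      exact hTanti M hMK
    -- lfp F_K ≤ M ⊓ y by induction
    have key : OrderHom.lfp ⟨fun I => T I K, hTmono K⟩ ≤ M ⊓ y := by
      apply OrderHom.lfp_induction (p := fun a => a ≤ M ⊓ y)
      · intro a ha _
        have haM : a ≤ M := ha.trans inf_le_left
        have hay : a ≤ y := ha.trans inf_le_right
        show T a K ≤ M ⊓ y
        refine le_inf ?_ ?_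
        · exact (hTmono K haM).trans hTMK
        · have h : T a K ≤ S y L := by
            constructor
            · rw [← hfst]
              exact ((hTmono K hay).trans (hTanti y hLK)).1
            · rw [hsnd, hL]
              have h2 : (T a K).2 ≤ (T M M).2 := ((hTmono K haM).trans (hTanti M hMK)).2
              rwa [hMfix] at h2
          exact h.trans hyfix.le
      · intro s hs
        exact sSup_le hs
    exact key.trans inf_le_right
end
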